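/- Let 𝒳 be a full additive subcategory of an abelian category 𝒜, let M be an object admitting a proper 𝒳-resolution, and let 0 → N → N' → N'' → 0 be a short exact sequence in 𝒜 that remains exact after applying Hom_𝒜(X, −) for every X ∈ 𝒳. Then there is a long exact sequence of relative Ext groups ⋯ → Ext^n_{𝒳𝒜}(M, N) → Ext^n_{𝒳𝒜}(M, N') → Ext^n_{𝒳𝒜}(M, N'') → Ext^{n+1}_{𝒳𝒜}(M, N) → ⋯ . -/

import Mathlib

open CategoryTheory Limits

universe w v u

variable {A : Type u} [Category.{v} A] [Abelian A]

/-- A complex `S` is `𝒳`-acyclic if `Hom_𝒜(X, S)` is acyclic for every `X ∈ 𝒳`. -/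
def XAcyclic (𝒳 : Set A) (S : CochainComplex A ℤ) : Prop :=
  ∀ X ∈ 𝒳, ∀ n : ℤ,
    ((((preadditiveCoyoneda.obj (Opposite.op X)).mapHomologicalComplex
      (ComplexShape.up ℤ)).obj S)).ExactAt n

/-- `𝒳`-quasi-isomorphisms of cochain complexes. -/
def XQuasiIso (𝒳 : Set A) {S T : CochainComplex A ℤ} (f : S ⟶ T) : Prop :=
  ∀ X ∈ 𝒳, QuasiIso (((preadditiveCoyoneda.obj (Opposite.op X)).mapHomologicalComplex
    (ComplexShape.up ℤ)).map f)

/-- The object `M` of `𝒜` viewed as a cochain complex concentrated in degree `k`. -/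
noncomputable abbrev singleCx (k : ℤ) (M : A) : CochainComplex A ℤ :=
  (HomologicalComplex.single A (ComplexShape.up ℤ) k).obj M

/-- The complex `Hom_𝒜(P, N)`, with `Hom_𝒜(P^{-n}, N)` in degree `n`; its `n`-th homology
is the relative cohomology group `Ext^n` when `P` is a proper resolution. -/
noncomputable def extComplex (P : CochainComplex A ℤ) (N : A) :
    CochainComplex AddCommGrpCat ℤ where
  X n := AddCommGrpCat.of (P.X (-n) ⟶ N)
  d i j := AddCommGrpCat.ofHom (AddMonoidHom.mk' (fun g => P.d (-j) (-i) ≫ g)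
    (fun g h => by simp [Preadditive.comp_add]))
  shape i j hij := by
    ext g
    have : P.d (-j) (-i) = 0 := P.shape _ _ (by simp only [ComplexShape.up_Rel] at hij ⊢; omega)
    simp [CategoryTheory.comp_apply, AddCommGrpCat.ofHom, this]
  d_comp_d' i j k _ _ := by
    ext g
    simp [CategoryTheory.comp_apply, AddCommGrpCat.ofHom]

/-- Functoriality of `Hom_𝒜(P, −)` in the second variable. -/
noncomputable def extComplexMap (P : CochainComplex A ℤ) {N N' : A} (f : N ⟶ N') :
    extComplex P N ⟶ extComplex P N' where
  f n := AddCommGrpCat.ofHom (AddMonoidHom.mk' (fun g => g ≫ f)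
    (fun g h => by simp [Preadditive.add_comp]))
  comm' i j _ := by
    ext g; simp [CategoryTheory.comp_apply, AddCommGrpCat.ofHom, extComplex]
    exact (Category.assoc _ _ _).symm

/-- Contravariant functoriality of `Hom_𝒜(−, N)` in the first variable. -/
noncomputable def extComplexMapLeft {P Q : CochainComplex A ℤ} (φ : P ⟶ Q) (N : A) :
    extComplex Q N ⟶ extComplex P N where
  f n := AddCommGrpCat.ofHom (AddMonoidHom.mk' (fun g => φ.f (-n) ≫ g)
    (fun g h => by simp [Preadditive.comp_add]))
  comm' i j _ := by
    ext g; simp [CategoryTheory.comp_apply, AddCommGrpCat.ofHom, extComplex]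
    exact (HomologicalComplex.Hom.comm_assoc φ (-j) (-i) g).symm

/-- `π : P ⟶ M` is a proper `𝒳`-resolution of `M`: `P` is concentrated in degrees `≤ 0` with
components in `𝒳`, and the augmented complex `⋯ → X^{-1} → X^0 → M → 0` becomes exact after
applying `Hom_𝒜(X, −)` for every `X ∈ 𝒳` (equivalently, `Hom_𝒜(X, π)` is a
quasi-isomorphism for every `X ∈ 𝒳`). -/
def IsProperRes (𝒳 : Set A) {M : A} (P : CochainComplex A ℤ) (π : P ⟶ singleCx 0 M) : Prop :=
  (∀ i : ℤ, i ≤ 0 → P.X i ∈ 𝒳) ∧ (∀ i : ℤ, 0 < i → IsZero (P.X i)) ∧ XQuasiIso 𝒳 π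

/-- `M` has finite `𝒳`-projective dimension: there is an exact sequence
`0 → X^{-n} → ⋯ → X^{-1} → X^0 → M → 0` with all `X^{-i} ∈ 𝒳`. -/
def FinXpd (𝒳 : Set A) (M : A) : Prop :=
  ∃ (n : ℕ) (P : CochainComplex A ℤ) (π : P ⟶ singleCx 0 M), QuasiIso π ∧
    (∀ i : ℤ, 0 < i → IsZero (P.X i)) ∧ (∀ i : ℤ, i < -(n : ℤ) → IsZero (P.X i)) ∧
    (∀ i : ℤ, -(n : ℤ) ≤ i → i ≤ 0 → P.X i ∈ 𝒳)

/-- `M` has `𝒳`-projective dimension at most `d`. -/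
def XpdLE (𝒳 : Set A) (M : A) (d : ℕ) : Prop :=
  ∃ (P : CochainComplex A ℤ) (π : P ⟶ singleCx 0 M), QuasiIso π ∧
    (∀ i : ℤ, 0 < i → IsZero (P.X i)) ∧ (∀ i : ℤ, i < -(d : ℤ) → IsZero (P.X i)) ∧
    (∀ i : ℤ, -(d : ℤ) ≤ i → i ≤ 0 → P.X i ∈ 𝒳)

/-! `Hom_𝒜(P^i, −)` is left exact, and it is also right exact on the given sequence: for
`P^i ∈ 𝒳` by `𝒳`-acyclicity, and trivially for the components `P^i = 0` with `i > 0`. So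
`Hom_𝒜(P, −)` turns `0 → N → N' → N'' → 0` into a short exact sequence of complexes of abelian
groups, and its long exact homology sequence is the required one. -/

lemma extComplexMap_comp (P : CochainComplex A ℤ) {N N' N'' : A} (f : N ⟶ N') (g : N' ⟶ N'') :
    extComplexMap P f ≫ extComplexMap P g = extComplexMap P (f ≫ g) := by
  ext n h
  exact Category.assoc _ _ _

lemma extComplexMap_zero (P : CochainComplex A ℤ) (N N' : A) :
    extComplexMap P (0 : N ⟶ N') = 0 := by
  ext n h
  exact Limits.comp_zero

noncomputable def extShortComplex (P : CochainComplex A ℤ) (S : ShortComplex A) :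
    ShortComplex (CochainComplex AddCommGrpCat ℤ) :=
  ShortComplex.mk (extComplexMap P S.f) (extComplexMap P S.g)
    (by rw [extComplexMap_comp, S.zero, extComplexMap_zero])

lemma extShortComplex_shortExact (P : CochainComplex A ℤ) {S : ShortComplex A}
    (hS : S.ShortExact) (hlift : ∀ i, Function.Surjective (fun h : P.X i ⟶ S.X₂ => h ≫ S.g)) :
    (extShortComplex P S).ShortExact := by
  have : Mono S.f := hS.mono_f
  refine HomologicalComplex.shortExact_of_degreewise_shortExact _ fun n => ?_
  have mono_f : Mono ((extShortComplex P S).map (HomologicalComplex.eval _ _ n)).f :=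
    (AddCommGrpCat.mono_iff_injective _).2 fun a b hab => (cancel_mono S.f).1 hab
  have epi_g : Epi ((extShortComplex P S).map (HomologicalComplex.eval _ _ n)).g :=
    (AddCommGrpCat.epi_iff_surjective _).2 (hlift (-n))
  refine ShortComplex.ShortExact.mk (mono_f := mono_f) (epi_g := epi_g) ?_
  rw [ShortComplex.ab_exact_iff]
  intro h (hh : h ≫ S.g = 0)
  exact ⟨hS.exact.lift h hh, hS.exact.lift_f h hh⟩

lemma IsProperRes.surjective_comp {𝒳 : Set A} {M : A} {P : CochainComplex A ℤ}
    {π : P ⟶ singleCx 0 M} (hP : IsProperRes 𝒳 P π) {N' N'' : A} {g : N' ⟶ N''}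
    (hg : ∀ X ∈ 𝒳, Function.Surjective (fun h : X ⟶ N' => h ≫ g)) (i : ℤ) :
    Function.Surjective (fun h : P.X i ⟶ N' => h ≫ g) := by
  rcases le_or_gt i 0 with hi | hi
  · exact hg _ (hP.1 i hi)
  · exact fun y => ⟨0, (hP.2.1 i hi).eq_of_src _ _⟩

/-- Proposition 4.5(1): for `M` with a proper `𝒳`-resolution `P` and an `𝒳`-acyclic short
exact sequence `0 → N → N' → N'' → 0` (one remaining exact after `Hom_𝒜(X, −)` for every
`X ∈ 𝒳`), there are connecting homomorphisms making the induced long sequence of relative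
cohomology groups `Ext^n_{𝒳𝒜}(M, −) = H^n(Hom_𝒜(P, −))` exact. -/
theorem stmt_12 (𝒳 : Set A) {M : A} (P : CochainComplex A ℤ) (π : P ⟶ singleCx 0 M)
    (hP : IsProperRes 𝒳 P π)
    {N N' N'' : A} (f : N ⟶ N') (g : N' ⟶ N'') (w : f ≫ g = 0)
    (hse : (ShortComplex.mk f g w).ShortExact)
    (hXexact : ∀ X ∈ 𝒳, Function.Surjective (fun h : X ⟶ N' => h ≫ g)) :
    ∃ ϑ : ∀ n : ℤ, ((extComplex P N'').homology n ⟶ (extComplex P N).homology (n + 1)),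
      ∀ n : ℤ,
        Function.Exact
          (HomologicalComplex.homologyMap (extComplexMap P f) n)
          (HomologicalComplex.homologyMap (extComplexMap P g) n) ∧
        Function.Exact
          (HomologicalComplex.homologyMap (extComplexMap P g) n) (ϑ n) ∧
        Function.Exact (ϑ n)
          (HomologicalComplex.homologyMap (extComplexMap P f) (n + 1)) := by
  have hS := extShortComplex_shortExact P hse (hP.surjective_comp hXexact)
  refine ⟨fun n => hS.δ n (n + 1) rfl, fun n => ⟨?_, ?_, ?_⟩⟩
  · exact (ShortComplex.ab_exact_iff_function_exact _).1 (hS.homology_exact₂ n)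
  · exact (ShortComplex.ab_exact_iff_function_exact _).1 (hS.homology_exact₃ n (n + 1) rfl)
  · exact (ShortComplex.ab_exact_iff_function_exact _).1 (hS.homology_exact₁ n (n + 1) rfl)
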